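/- There exists a positive integer n₀ such that for every integer n ≥ n₀, f(3n−1)² + 2·f(3n−1)·f(2n−1) > f(3n)·f(3n−2) + f(3n−2)·f(2n). -/

import Mathlib

/-!
Only about `m * 2 ^ (m / 2)` subsets of `{1, …, m}` fail to be relatively prime, since each of
them lies inside the multiples of some `d ≥ 2`. Hence `f m = 2 ^ m - O(m 2 ^ (m / 2))`, and
with `f m ≤ 2 ^ m` on the right-hand side both sides equal `2 ^ (6n - 2)` up to lower order;
the next terms are `2 ^ (5n - 1)` on the left against `2 ^ (5n - 2)` on the right, while all
errors are `O(n 2 ^ (9n / 2))`.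
-/

/-- `f n` is the number of relatively prime subsets of `{1, 2, ..., n}`,
i.e. subsets `A` with `gcd A = 1` (such subsets are automatically nonempty). -/
def f (n : ℕ) : ℕ :=
  ((Finset.Icc 1 n).powerset.filter (fun A => A.gcd id = 1)).card

open Finset

lemma card_filter_Icc_dvd (m d : ℕ) : #{x ∈ Icc 1 m | d ∣ x} = m / d := by
  rw [← Nat.Ioc_filter_dvd_card_eq_div m d]
  rfl

lemma f_le_two_pow (m : ℕ) : f m ≤ 2 ^ m :=
  (card_filter_le _ _).trans (by rw [card_powerset, Nat.card_Icc, Nat.add_sub_cancel])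

-- The empty set, whose gcd is `0`, is covered by `d = 2`.
lemma exists_dvd_of_gcd_ne_one {m : ℕ} (hm : 0 < m) {A : Finset ℕ} (hA : A ⊆ Icc 1 m)
    (h : A.gcd id ≠ 1) : ∃ d ∈ Icc 2 (m + 1), ∀ x ∈ A, d ∣ x := by
  rcases A.eq_empty_or_nonempty with rfl | ⟨x, hx⟩
  · exact ⟨2, mem_Icc.mpr ⟨le_rfl, by omega⟩, by simp⟩
  · have hxm := mem_Icc.mp (hA hx)
    have hdx : A.gcd id ∣ x := gcd_dvd hx
    have hd0 : A.gcd id ≠ 0 := fun h0 => by rw [h0, zero_dvd_iff] at hdx; omega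
    have hdm := Nat.le_of_dvd (by omega) hdx
    exact ⟨A.gcd id, mem_Icc.mpr ⟨by omega, by omega⟩, fun y hy => gcd_dvd hy⟩

lemma two_pow_le_f_add (m : ℕ) (hm : 0 < m) : 2 ^ m ≤ f m + m * 2 ^ (m / 2) := by
  have hsplit := card_filter_add_card_filter_not (s := (Icc 1 m).powerset) (fun A => A.gcd id = 1)
  rw [card_powerset, Nat.card_Icc, Nat.add_sub_cancel] at hsplit
  have hsub : {A ∈ (Icc 1 m).powerset | ¬A.gcd id = 1} ⊆
      (Icc 2 (m + 1)).biUnion fun d => {x ∈ Icc 1 m | d ∣ x}.powerset := by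
    intro A hA
    rw [mem_filter, mem_powerset] at hA
    obtain ⟨d, hd, hdA⟩ := exists_dvd_of_gcd_ne_one hm hA.1 hA.2
    exact mem_biUnion.mpr ⟨d, hd, mem_powerset.mpr fun x hx => mem_filter.mpr ⟨hA.1 hx, hdA x hx⟩⟩
  have hbad : #{A ∈ (Icc 1 m).powerset | ¬A.gcd id = 1} ≤ m * 2 ^ (m / 2) := by
    have hcard : #(Icc 2 (m + 1)) = m := by rw [Nat.card_Icc]; omega
    refine (card_le_card hsub).trans ((card_biUnion_le_card_mul _ _ _ fun d hd => ?_).trans_eq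
      (by rw [hcard]))
    rw [card_powerset, card_filter_Icc_dvd]
    exact Nat.pow_le_pow_right two_pos (Nat.div_le_div_left (mem_Icc.mp hd).1 two_pos)
  unfold f
  omega

lemma sixteen_mul_le_two_pow_div_six {m : ℕ} (hm : 66 ≤ m) : 16 * m ≤ 2 ^ (m / 6) := by
  obtain ⟨s, hs⟩ : ∃ s, m / 6 = 11 + s := ⟨m / 6 - 11, by omega⟩
  have := s.lt_two_pow_self
  rw [hs, pow_add]
  omega

lemma sixteen_mul_mul_two_pow_half_le {m : ℕ} (hm : 66 ≤ m) :
    16 * (m * 2 ^ (m / 2)) ≤ 2 ^ (2 * m / 3) :=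
  calc 16 * (m * 2 ^ (m / 2)) = 16 * m * 2 ^ (m / 2) := by ring
    _ ≤ 2 ^ (m / 6) * 2 ^ (m / 2) := Nat.mul_le_mul_right _ (sixteen_mul_le_two_pow_div_six hm)
    _ = 2 ^ (m / 6 + m / 2) := (pow_add _ _ _).symm
    _ ≤ 2 ^ (2 * m / 3) := Nat.pow_le_pow_right two_pos (by omega)

-- Times 4, both sides are `p ^ 2 + c * p * q` up to errors, with `c = 2` on the right and
-- `c = 1` on the left; `16 * a, 16 * b ≤ q` keeps the errors below `3 / 4 * p * q`.
lemma mul_add_mul_lt_of_approx {p q A B C D E a b : ℕ} (hq : 0 < q) (hqp : q ≤ p)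
    (hB : B ≤ p) (hC : 4 * C ≤ p) (hE : E ≤ q) (hA : p ≤ 2 * A + 2 * a)
    (hD : q ≤ 2 * D + 2 * b) (ha : 16 * a ≤ q) (hb : 16 * b ≤ q) :
    B * C + C * E < A ^ 2 + 2 * A * D := by
  zify at *
  have hu : 0 ≤ (p : ℤ) - 2 * a := by linarith
  have hv : 0 ≤ (q : ℤ) - 2 * b := by linarith
  have hupper : 4 * ((B : ℤ) * C + C * E) ≤ p * (p + q) := by nlinarith
  have hlower : ((p : ℤ) - 2 * a) ^ 2 + 2 * (p - 2 * a) * (q - 2 * b) ≤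
      4 * (A ^ 2 + 2 * A * D) := by nlinarith
  nlinarith

theorem stmt_15 :
    ∃ n₀ : ℕ, 0 < n₀ ∧ ∀ n : ℕ, n₀ ≤ n →
      f (3 * n - 1) ^ 2 + 2 * f (3 * n - 1) * f (2 * n - 1) >
        f (3 * n) * f (3 * n - 2) + f (3 * n - 2) * f (2 * n) := by
  refine ⟨34, by norm_num, fun n hn => ?_⟩
  have hC : 4 * f (3 * n - 2) ≤ 2 ^ (3 * n) := by
    rw [← pow_sub_mul_pow 2 (show 2 ≤ 3 * n by omega)]
    linarith [f_le_two_pow (3 * n - 2)]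
  have hA : 2 ^ (3 * n) ≤ 2 * f (3 * n - 1) + 2 * ((3 * n - 1) * 2 ^ ((3 * n - 1) / 2)) := by
    rw [← pow_sub_mul_pow 2 (show 1 ≤ 3 * n by omega), pow_one]
    linarith [two_pow_le_f_add (3 * n - 1) (by omega)]
  have hD : 2 ^ (2 * n) ≤ 2 * f (2 * n - 1) + 2 * ((2 * n - 1) * 2 ^ ((2 * n - 1) / 2)) := by
    rw [← pow_sub_mul_pow 2 (show 1 ≤ 2 * n by omega), pow_one]
    linarith [two_pow_le_f_add (2 * n - 1) (by omega)]
  have ha := (sixteen_mul_mul_two_pow_half_le (m := 3 * n - 1) (by omega)).trans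
    (Nat.pow_le_pow_right two_pos (show 2 * (3 * n - 1) / 3 ≤ 2 * n by omega))
  have hb := (sixteen_mul_mul_two_pow_half_le (m := 2 * n - 1) (by omega)).trans
    (Nat.pow_le_pow_right two_pos (show 2 * (2 * n - 1) / 3 ≤ 2 * n by omega))
  exact mul_add_mul_lt_of_approx (Nat.two_pow_pos _)
    (Nat.pow_le_pow_right two_pos (by omega)) (f_le_two_pow _) hC (f_le_two_pow _) hA hD ha hb
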